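/- Let G = (V, E) be a connected multigraph, f a divisor on G, and M a positive integer with M > dist_rec_G(f) + max{0, max_{v ∈ V}(f(v) − d_G(v))}; let G' and f' be as in the apex construction. Then dist_rec_G(f) ≤ dist_nonhalt_{G'}(f'). -/

import Mathlib

/-!
Let `g'` be an effective divisor on `G'` of degree `n = dist_nonhalt_{G'}(f')` with `f' + g'`
non-halting, and suppose `n < dist_rec_G(f)`. Then every entry of `g'` is below
`dist_rec_G(f)`, so by the bound on `M` the apex holds fewer than `M` chips and
`d := f + g'|_V` satisfies `d v < deg_G v + M` for all `v`.

Since `f' + g'` is non-halting, some vertex is active after every legal game. Firing only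
original vertices, the apex gains `M` chips per firing, so it stays inactive until `|V|`
firings have happened. No original vertex can fire twice among these: a second firing of `v`
would need `d v ≥ deg_G v + M`. Hence there is a legal game in which every original vertex
fires exactly once. In `G'` each original vertex carries `M` more chips and has degree `M`
larger than in `G`, so the same sequence is a legal game in `G` from `d`, and firing every
vertex once returns to `d`. Thus `d` is recurrent, and `dist_rec_G(f) ≤ deg(g'|_V) ≤ n`.
-/

variable {V : Type*} [Fintype V] [DecidableEq V]

/-- The degree of vertex `v` in the multigraph with edge-multiplicity function `m`. -/
def mgDeg (m : V → V → ℕ) (v : V) : ℕ := ∑ u, m v u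

/-- The divisor obtained from `f` by firing vertex `v`. -/
def mgFire (m : V → V → ℕ) (f : V → ℤ) (v : V) : V → ℤ :=
  fun u => if u = v then f v - mgDeg m v else f u + m v u

/-- The divisor obtained from `f` by firing the vertices of `L` in order. -/
def mgPlay (m : V → V → ℕ) (f : V → ℤ) (L : List V) : V → ℤ :=
  L.foldl (mgFire m) f

/-- `L` is a legal game from `f`: each fired vertex is active when fired. -/
def mgLegal (m : V → V → ℕ) : (V → ℤ) → List V → Prop
  | _, [] => True
  | f, v :: L => ((mgDeg m v : ℤ) ≤ f v) ∧ mgLegal m (mgFire m f v) L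

/-- A divisor is stable if no vertex is active. -/
def mgStable (m : V → V → ℕ) (f : V → ℤ) : Prop := ∀ v, f v < (mgDeg m v : ℤ)

/-- A divisor is halting if some legal game from it ends at a stable divisor. -/
def mgHalting (m : V → V → ℕ) (f : V → ℤ) : Prop :=
  ∃ L : List V, mgLegal m f L ∧ mgStable m (mgPlay m f L)

/-- A divisor is recurrent if some non-empty legal game from it leads back to it. -/
def mgRecurrent (m : V → V → ℕ) (f : V → ℤ) : Prop :=
  ∃ L : List V, L ≠ [] ∧ mgLegal m f L ∧ mgPlay m f L = f

/-- A divisor is effective if it is nonnegative everywhere. -/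
def mgEffective (f : V → ℤ) : Prop := ∀ v, 0 ≤ f v

/-- The degree of a divisor. -/
def mgDegDiv (f : V → ℤ) : ℤ := ∑ v, f v

/-- Distance of a divisor from a recurrent state. -/
noncomputable def mgDistRec (m : V → V → ℕ) (f : V → ℤ) : ℕ :=
  sInf {n : ℕ | ∃ g : V → ℤ, mgEffective g ∧ mgDegDiv g = (n : ℤ) ∧ mgRecurrent m (f + g)}

/-- Distance of a divisor from a non-halting state. -/
noncomputable def mgDistNonhalt (m : V → V → ℕ) (f : V → ℤ) : ℕ :=
  sInf {n : ℕ | ∃ g : V → ℤ, mgEffective g ∧ mgDegDiv g = (n : ℤ) ∧ ¬ mgHalting m (f + g)}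

/-- A multigraph is connected if any two vertices are joined by a path of
positive-multiplicity edges. -/
def mgConnected (m : V → V → ℕ) : Prop :=
  ∀ u v : V, Relation.ReflTransGen (fun a b => 0 < m a b) u v

/-- `f` and `g` are linearly equivalent: `f` can be transformed to `g` by firings. -/
def mgLinEquiv (m : V → V → ℕ) (f g : V → ℤ) : Prop :=
  ∃ L : List V, mgPlay m f L = g

/-- A divisor is winnable if it is linearly equivalent to an effective divisor. -/
def mgWinnable (m : V → V → ℕ) (f : V → ℤ) : Prop :=
  ∃ g : V → ℤ, mgEffective g ∧ mgLinEquiv m f g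

/-- The rank of a divisor. -/
noncomputable def mgRank (m : V → V → ℕ) (f : V → ℤ) : ℤ :=
  ((sInf {n : ℕ | ∃ g : V → ℤ, mgEffective g ∧ mgDegDiv g = (n : ℤ) ∧
    ¬ mgWinnable m (f - g)} : ℕ) : ℤ) - 1

/-- Edge multiplicities of the apex construction: the edges of `G` (on the `some`
vertices) together with `M` parallel edges between the new vertex `none` and each
original vertex. -/
def apexM (m : V → V → ℕ) (M : ℕ) : Option V → Option V → ℕ
  | some u, some v => m u v
  | some _, none => M
  | none, some _ => M
  | none, none => 0

/-- The divisor `f\'` of the apex construction: `f\'(v) = f(v) + M` on original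
vertices and `f\'(v_new) = 0`. -/
def apexF (f : V → ℤ) (M : ℕ) : Option V → ℤ
  | some v => f v + M
  | none => 0

open Finset

section ChipFiring

variable (m : V → V → ℕ)

@[simp]
lemma mgPlay_nil (f : V → ℤ) : mgPlay m f [] = f := rfl

@[simp]
lemma mgPlay_cons (f : V → ℤ) (v : V) (L : List V) :
    mgPlay m f (v :: L) = mgPlay m (mgFire m f v) L := rfl

lemma mgFire_add (f g : V → ℤ) (v : V) : mgFire m (f + g) v = mgFire m f v + g := by
  ext u
  by_cases huv : u = v
  · subst huv; simp only [mgFire, if_pos, Pi.add_apply]; ring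
  · simp only [mgFire, huv, if_false, Pi.add_apply]; ring

lemma mgPlay_add (f g : V → ℤ) (L : List V) : mgPlay m (f + g) L = mgPlay m f L + g := by
  induction L generalizing f with
  | nil => rfl
  | cons v L ih => simp only [mgPlay_cons, mgFire_add, ih]

variable {m}

lemma mgLegal_append {f : V → ℤ} {L₁ L₂ : List V} :
    mgLegal m f (L₁ ++ L₂) ↔ mgLegal m f L₁ ∧ mgLegal m (mgPlay m f L₁) L₂ := by
  induction L₁ generalizing f with
  | nil => simp [mgLegal]
  | cons v L ih => simp [mgLegal, ih, and_assoc]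

lemma mgLegal_concat {f : V → ℤ} {L : List V} {v : V} :
    mgLegal m f (L ++ [v]) ↔ mgLegal m f L ∧ (mgDeg m v : ℤ) ≤ mgPlay m f L v := by
  simp [mgLegal_append, mgLegal]

lemma exists_active_of_not_mgHalting {f : V → ℤ} (hf : ¬ mgHalting m f) {L : List V}
    (hL : mgLegal m f L) : ∃ v, (mgDeg m v : ℤ) ≤ mgPlay m f L v := by
  by_contra! hstable
  exact hf ⟨L, hL, hstable⟩

lemma mgPlay_apply (hloop : ∀ v, m v v = 0) (f : V → ℤ) (L : List V) (u : V) :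
    mgPlay m f L u = f u + ∑ w, (L.count w : ℤ) * m w u - L.count u * mgDeg m u := by
  induction L generalizing f with
  | nil => simp
  | cons x L ih =>
    simp only [mgPlay_cons, ih, List.count_cons, beq_iff_eq, Nat.cast_add, Nat.cast_ite,
      Nat.cast_one, Nat.cast_zero, add_mul, ite_mul, one_mul, zero_mul, sum_add_distrib,
      sum_ite_eq, mem_univ, if_true]
    by_cases hux : u = x
    · subst hux; simp [mgFire, hloop]; ring
    · simp [mgFire, hux, Ne.symm hux]; ring

lemma mgDegDiv_mgPlay (hloop : ∀ v, m v v = 0) (f : V → ℤ) (L : List V) :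
    mgDegDiv (mgPlay m f L) = mgDegDiv f := by
  simp only [mgDegDiv, mgPlay_apply hloop, sum_sub_distrib, sum_add_distrib]
  rw [sum_comm]
  simp [mgDeg, mul_sum]

omit [DecidableEq V] in
lemma mgDeg_eq_sum_left (hsymm : ∀ u v, m u v = m v u) (v : V) :
    (mgDeg m v : ℤ) = ∑ w, (m w v : ℤ) := by
  simp [mgDeg, hsymm v]

lemma mgPlay_apply_le_of_nodup (hsymm : ∀ u v, m u v = m v u) (hloop : ∀ v, m v v = 0)
    (f : V → ℤ) {L : List V} (hL : L.Nodup) {v : V} (hv : v ∈ L) : mgPlay m f L v ≤ f v := by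
  have hsum : ∑ w, (L.count w : ℤ) * m w v ≤ mgDeg m v := by
    rw [mgDeg_eq_sum_left hsymm]
    gcongr with w
    exact mul_le_of_le_one_left (by positivity)
      (by exact_mod_cast List.nodup_iff_count_le_one.mp hL w)
  rw [mgPlay_apply hloop, List.count_eq_one_of_mem hL hv, Nat.cast_one, one_mul]
  linarith

lemma mgPlay_eq_self_of_count_eq (hsymm : ∀ u v, m u v = m v u) (hloop : ∀ v, m v v = 0)
    (f : V → ℤ) {L : List V} {k : ℕ} (hL : ∀ v, L.count v = k) : mgPlay m f L = f := by
  ext u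
  rw [mgPlay_apply hloop, mgDeg_eq_sum_left hsymm]
  simp [hL, mul_sum]

lemma not_mgHalting_of_le_mgDegDiv [Nonempty V] (hloop : ∀ v, m v v = 0) {f : V → ℤ}
    (hf : ∑ v, (mgDeg m v : ℤ) ≤ mgDegDiv f) : ¬ mgHalting m f := by
  rintro ⟨L, -, hL⟩
  have hlt : mgDegDiv (mgPlay m f L) < ∑ v, (mgDeg m v : ℤ) :=
    sum_lt_sum_of_nonempty univ_nonempty fun v _ => hL v
  rw [mgDegDiv_mgPlay hloop] at hlt
  omega

omit [DecidableEq V] in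
lemma le_mgDegDiv {g : V → ℤ} (hg : mgEffective g) (v : V) : g v ≤ mgDegDiv g :=
  single_le_sum (fun w _ => hg w) (mem_univ v)

lemma exists_eq_mgDistNonhalt [Nonempty V] (hloop : ∀ v, m v v = 0) (f : V → ℤ) :
    ∃ g, mgEffective g ∧ mgDegDiv g = mgDistNonhalt m f ∧ ¬ mgHalting m (f + g) := by
  obtain ⟨v⟩ := ‹Nonempty V›
  obtain ⟨c, hc⟩ : ∃ c : ℕ, ∑ v, (mgDeg m v : ℤ) - mgDegDiv f ≤ c :=
    ⟨_, Int.self_le_toNat _⟩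
  suffices hne : {n : ℕ | ∃ g : V → ℤ, mgEffective g ∧ mgDegDiv g = n ∧
      ¬ mgHalting m (f + g)}.Nonempty from Nat.sInf_mem hne
  refine ⟨c, Pi.single v (c : ℤ), ?_, ?_, not_mgHalting_of_le_mgDegDiv hloop ?_⟩
  · intro w
    by_cases hw : w = v
    · subst hw; simp
    · simp [hw]
  · simp [mgDegDiv]
  · simp only [mgDegDiv, Pi.add_apply, sum_add_distrib, sum_pi_single', mem_univ,
      if_true] at hc ⊢
    omega

lemma mgDistRec_le_mgDegDiv {f g : V → ℤ} (hg : mgEffective g) (hrec : mgRecurrent m (f + g)) :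
    (mgDistRec m f : ℤ) ≤ mgDegDiv g := by
  have h0 : 0 ≤ mgDegDiv g := sum_nonneg fun v _ => hg v
  unfold mgDistRec
  have := Nat.sInf_le (show (mgDegDiv g).toNat ∈ {n : ℕ | ∃ g : V → ℤ, mgEffective g ∧
    mgDegDiv g = (n : ℤ) ∧ mgRecurrent m (f + g)} from ⟨g, hg, by omega, hrec⟩)
  omega

end ChipFiring

section Apex

variable (m : V → V → ℕ) (M : ℕ)

omit [Fintype V] [DecidableEq V] in
lemma apexM_self (hloop : ∀ v, m v v = 0) : ∀ u, apexM m M u u = 0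
  | none => rfl
  | some v => hloop v

omit [DecidableEq V] in
lemma mgDeg_apexM_some (v : V) : mgDeg (apexM m M) (some v) = mgDeg m v + M := by
  simp [mgDeg, Fintype.sum_option, apexM, add_comm]

omit [DecidableEq V] in
lemma mgDeg_apexM_none : mgDeg (apexM m M) none = Fintype.card V * M := by
  simp [mgDeg, Fintype.sum_option, apexM]

lemma mgFire_apexM_some_comp_some (h : Option V → ℤ) (x : V) :
    (fun v => mgFire (apexM m M) h (some x) (some v)) =
      mgFire m (fun v => h (some v)) x + fun v => -if v = x then (M : ℤ) else 0 := by
  ext v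
  by_cases hvx : v = x
  · subst hvx; simp [mgFire, mgDeg_apexM_some]; ring
  · simp [mgFire, hvx, apexM]

lemma mgPlay_apexM_map_some_some (h : Option V → ℤ) (A : List V) (v : V) :
    mgPlay (apexM m M) h (A.map some) (some v) =
      mgPlay m (fun v => h (some v)) A v - M * A.count v := by
  induction A generalizing h with
  | nil => simp
  | cons x A ih =>
    rw [List.map_cons, mgPlay_cons, ih, mgFire_apexM_some_comp_some, mgPlay_add, mgPlay_cons,
      List.count_cons]
    by_cases hvx : v = x
    · subst hvx; simp; ring
    · simp [hvx, Ne.symm hvx]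

lemma mgPlay_apexM_map_some_none (h : Option V → ℤ) (A : List V) :
    mgPlay (apexM m M) h (A.map some) none = h none + M * A.length := by
  induction A generalizing h with
  | nil => simp
  | cons x A ih =>
    rw [List.map_cons, mgPlay_cons, ih]
    simp [mgFire, apexM]
    ring

variable {m M}

lemma nodup_and_mgLegal_of_mgLegal_apexM (hsymm : ∀ u v, m u v = m v u)
    (hloop : ∀ v, m v v = 0) {d : V → ℤ} (hd : ∀ v, d v < mgDeg m v + M) {h : Option V → ℤ}
    (hh : ∀ v, h (some v) = d v + M) {A : List V} (hA : mgLegal (apexM m M) h (A.map some)) :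
    A.Nodup ∧ mgLegal m d A := by
  induction A using List.reverseRecOn with
  | nil => exact ⟨List.nodup_nil, trivial⟩
  | append_singleton A v ih =>
    have hcomp : (fun v => h (some v)) = d + fun _ => (M : ℤ) := funext hh
    rw [List.map_append, List.map_singleton, mgLegal_concat, mgPlay_apexM_map_some_some,
      mgDeg_apexM_some, hcomp, mgPlay_add] at hA
    obtain ⟨hnd, hleg⟩ := ih hA.1
    have hv : v ∉ A := by
      intro hv
      have hle := mgPlay_apply_le_of_nodup hsymm hloop d hnd hv
      have hM : (M : ℤ) ≤ M * A.count v :=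
        le_mul_of_one_le_right (by positivity) (by exact_mod_cast List.count_pos_iff.mpr hv)
      have := hd v
      simp only [Pi.add_apply] at hA
      push_cast at hA
      linarith [hA.2]
    rw [List.count_eq_zero.mpr hv] at hA
    refine ⟨List.concat_eq_append ▸ hnd.concat hv, mgLegal_concat.mpr ⟨hleg, ?_⟩⟩
    simpa using hA.2

lemma exists_mgLegal_apexM_of_not_mgHalting {h : Option V → ℤ} (hnh : ¬ mgHalting (apexM m M) h)
    (hnone : h none < M) :
    ∀ k ≤ Fintype.card V, ∃ A : List V, A.length = k ∧ mgLegal (apexM m M) h (A.map some) := by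
  intro k hk
  induction k with
  | zero => exact ⟨[], rfl, trivial⟩
  | succ k ih =>
    obtain ⟨A, hlen, hA⟩ := ih (by omega)
    obtain ⟨u, hu⟩ := exists_active_of_not_mgHalting hnh hA
    cases u with
    | none =>
      rw [mgPlay_apexM_map_some_none, mgDeg_apexM_none, hlen] at hu
      have hkM : (M : ℤ) * (k + 1) ≤ Fintype.card V * M := by
        rw [mul_comm]; exact_mod_cast Nat.mul_le_mul_right M hk
      push_cast at hu
      linarith
    | some x =>
      refine ⟨A ++ [x], by simp [hlen], ?_⟩
      rw [List.map_append, List.map_singleton, mgLegal_concat]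
      exact ⟨hA, hu⟩

theorem mgRecurrent_of_not_mgHalting_apexM [Nonempty V] (hsymm : ∀ u v, m u v = m v u)
    (hloop : ∀ v, m v v = 0) {d : V → ℤ} (hd : ∀ v, d v < mgDeg m v + M) {h : Option V → ℤ}
    (hh : ∀ v, h (some v) = d v + M) (hnone : h none < M)
    (hnh : ¬ mgHalting (apexM m M) h) : mgRecurrent m d := by
  obtain ⟨A, hlen, hA⟩ := exists_mgLegal_apexM_of_not_mgHalting hnh hnone _ le_rfl
  obtain ⟨hnd, hleg⟩ := nodup_and_mgLegal_of_mgLegal_apexM hsymm hloop hd hh hA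
  have hmem : ∀ v, v ∈ A := by
    have : A.toFinset = univ := eq_univ_of_card _ (by rw [List.toFinset_card_of_nodup hnd, hlen])
    simpa [Finset.ext_iff] using this
  refine ⟨A, List.ne_nil_of_length_pos (hlen ▸ Fintype.card_pos), hleg,
    mgPlay_eq_self_of_count_eq hsymm hloop d fun v => List.count_eq_one_of_mem hnd (hmem v)⟩

end Apex

theorem stmt15_general [Nonempty V] (m : V → V → ℕ) (hsymm : ∀ u v, m u v = m v u)
    (hloop : ∀ v, m v v = 0) (f : V → ℤ) (M : ℕ)
    (hM : (mgDistRec m f : ℤ) +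
        max 0 (Finset.univ.sup' Finset.univ_nonempty (fun v => f v - (mgDeg m v : ℤ)))
      < (M : ℤ)) :
    mgDistRec m f ≤ mgDistNonhalt (apexM m M) (apexF f M) := by
  obtain ⟨g, hg, hgdeg, hnh⟩ := exists_eq_mgDistNonhalt (apexM_self m M hloop) (apexF f M)
  by_contra! hlt
  have hg_lt : ∀ u, g u < mgDistRec m f := fun u =>
    (le_mgDegDiv hg u).trans_lt (by rw [hgdeg]; exact_mod_cast hlt)
  set D := max 0 (univ.sup' univ_nonempty fun v => f v - (mgDeg m v : ℤ))
  have hf_le : ∀ v, f v - mgDeg m v ≤ D := fun v =>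
    (le_sup' (fun v => f v - (mgDeg m v : ℤ)) (mem_univ v)).trans (le_max_right _ _)
  have hrec : mgRecurrent m (f + fun v => g (some v)) := by
    refine mgRecurrent_of_not_mgHalting_apexM hsymm hloop (h := apexF f M + g) (M := M)
      (fun v => ?_) (fun v => ?_) ?_ hnh
    · show f v + g (some v) < _
      linarith [hg_lt (some v), hf_le v]
    · simp [apexF]; ring
    · simp only [Pi.add_apply, apexF]
      linarith [hg_lt none, show 0 ≤ D from le_max_left _ _]
  have hrestrict : mgDegDiv (fun v => g (some v)) ≤ mgDegDiv g := by
    simp [mgDegDiv, Fintype.sum_option, hg none]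
  have := mgDistRec_le_mgDegDiv (fun v => hg (some v)) hrec
  omega

/-- `dist_rec_G(f) ≤ dist_nonhalt_{G'}(f')` for the apex construction. -/
theorem stmt15 [Nonempty V] (m : V → V → ℕ) (hsymm : ∀ u v, m u v = m v u)
    (hloop : ∀ v, m v v = 0) (hconn : mgConnected m) (f : V → ℤ) (M : ℕ)
    (hMpos : 0 < M)
    (hM : (mgDistRec m f : ℤ) +
        max 0 (Finset.univ.sup' Finset.univ_nonempty (fun v => f v - (mgDeg m v : ℤ)))
      < (M : ℤ)) :
    mgDistRec m f ≤ mgDistNonhalt (apexM m M) (apexF f M) :=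
  stmt15_general m hsymm hloop f M hM
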